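/- Let P be a large-tree forcing notion with 2^{<ω} ∈ P, let c be a P×_{E0}P-real name, σ ∈ 2^{<ω}, and suppose the condition ⟨R,R'⟩ ∈ P×_{E0}P directly forces σ·c ≠ π_left (respectively, σ·c ≠ π_right). Then there is a stronger condition ⟨T,T'⟩ ∈ P×_{E0}P, ⟨T,T'⟩ ≤ ⟨R,R'⟩, which directly forces c ∉ [σ·T] (respectively, c ∉ [σ·T']). -/
import Mathlib


namespace E0L

/-- Finite binary strings `2^{<ω}`. -/
abbrev Str : Type := List Bool

/-- Sets of binary strings (in particular, trees). -/
abbrev Tr : Type := Set Str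

/-- The action `s·t` of a string on a string:
`(s·t)(k) = t(k) + s(k) mod 2` for `k < min(|s|,|t|)` and `(s·t)(k) = t(k)` otherwise. -/
def act (s t : Str) : Str := List.ofFn fun k : Fin t.length => Bool.xor (s.getD k false) (t.get k)

/-- The action `s·T` of a string on a set of strings. -/
def actT (s : Str) (T : Tr) : Tr := (act s) '' T

/-- `T ↾ s = {t ∈ T : s ⊆ t or t ⊆ s}`. -/
def restr (T : Tr) (s : Str) : Tr := {t ∈ T | s <+: t ∨ t <+: s}

/-- `[T]`, the set of infinite branches of `T` (as elements of Cantor space `2^ω`). -/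
def branches (T : Tr) : Set (ℕ → Bool) := {x | ∀ n : ℕ, (List.ofFn fun k : Fin n => x k) ∈ T}

/-- `T[s] = {t : s ⊆ t or t ⊂ s}`. -/
def Tbr (s : Str) : Tr := {t | s <+: t ∨ (t <+: s ∧ t ≠ s)}

/-- `LTwit T r q` : the strings `q i n` witness that `T` is an E0-large tree with stem `r`:
`|q^0_n| = |q^1_n| ≥ 1`, `q^i_n(0) = i`, and `T` consists of all initial segments of strings
of the form `r⌢q^{i(0)}_0⌢…⌢q^{i(n)}_n`. -/
def LTwit (T : Tr) (r : Str) (q : ℕ → Bool → Str) : Prop :=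
  (∀ n : ℕ, (q n true).length = (q n false).length ∧ 1 ≤ (q n false).length) ∧
  (∀ n : ℕ, ∀ i : Bool, (q n i).head? = some i) ∧
  T = {t | ∃ n : ℕ, ∃ f : ℕ → Bool,
        t <+: r ++ ((List.range (n+1)).map (fun k => q k (f k))).flatten}

/-- `T` is an E0-large tree (`T ∈ LT`). -/
def IsLT (T : Tr) : Prop := ∃ r q, LTwit T r q

/-- `stem T` : the longest `s ∈ T` with `T = T↾s`. -/
noncomputable def stem (T : Tr) : Str :=
  Classical.epsilon fun s => s ∈ T ∧ restr T s = T ∧ ∀ t ∈ T, restr T t = T → t.length ≤ s.length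

/-- The canonical witness `(r, q)` of an E0-large tree. -/
noncomputable def witness (T : Tr) : Str × (ℕ → Bool → Str) :=
  Classical.epsilon fun rq => LTwit T rq.1 rq.2

/-- Splitting levels computed from a witness: `spl_0 = |r|`, `spl_{n+1} = spl_n + |q^i_n|`. -/
def splN (r : Str) (q : ℕ → Bool → Str) : ℕ → ℕ
  | 0 => r.length
  | n+1 => splN r q n + (q n false).length

/-- `spl T n`, the `n`-th splitting level of an E0-large tree `T`. -/
noncomputable def spl (T : Tr) (n : ℕ) : ℕ := splN (witness T).1 (witness T).2 n

/-- Simple splitting `T→i = T↾(stem(T)⌢i)`. -/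
noncomputable def split1 (T : Tr) (i : Bool) : Tr := restr T (stem T ++ [i])

/-- Iterated splitting `T→s`: `T→Λ = T`, `T→(s⌢i) = (T→s)→i`. -/
noncomputable def splitS (T : Tr) (s : Str) : Tr := s.foldl split1 T

/-- `S ⊆_n T` : `S ⊆ T` and `spl_k(S) = spl_k(T)` for all `k < n`. -/
def subN (n : ℕ) (S T : Tr) : Prop := S ⊆ T ∧ ∀ k < n, spl S k = spl T k

/-- A large-tree forcing notion: a set of E0-large trees closed under restriction
and under the action of strings. -/
def IsLTF (P : Set Tr) : Prop :=
  (∀ T ∈ P, IsLT T) ∧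
  (∀ T ∈ P, ∀ u ∈ T, restr T u ∈ P) ∧
  (∀ T ∈ P, ∀ s : Str, actT s T ∈ P)

/-- `T` is an `n`-collage over `P`: `T ∈ LT` and `T→s ∈ P` for all `s ∈ 2^n`. -/
def IsCollage (P : Set Tr) (n : ℕ) (T : Tr) : Prop :=
  IsLT T ∧ ∀ s : Str, s.length = n → splitS T s ∈ P

/-- `D` is open dense in `P` (as a set of trees). -/
def OpenDense1 (P D : Set Tr) : Prop :=
  D ⊆ P ∧ (∀ S ∈ P, ∃ T ∈ D, T ⊆ S) ∧ (∀ S ∈ P, ∀ T ∈ D, S ⊆ T → S ∈ D)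

/-- `⟨T,T'⟩` is a condition of the conditional product `P ×_{E0} P`. -/
def CondPair (P : Set Tr) (p : Tr × Tr) : Prop :=
  p.1 ∈ P ∧ p.2 ∈ P ∧ ∃ s : Str, actT s p.1 = p.2

/-- Componentwise order on pairs of trees: `p ≤ q`. -/
def pleq (p q : Tr × Tr) : Prop := p.1 ⊆ q.1 ∧ p.2 ⊆ q.2

/-- Compatibility of two conditions in `P ×_{E0} P`. -/
def Compat (P : Set Tr) (p q : Tr × Tr) : Prop :=
  ∃ r : Tr × Tr, CondPair P r ∧ pleq r p ∧ pleq r q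

/-- `D` is pre-dense in `P ×_{E0} P`. -/
def PreDense2 (P : Set Tr) (D : Set (Tr × Tr)) : Prop :=
  ∀ p : Tr × Tr, CondPair P p → ∃ q ∈ D, Compat P p q

/-- `D` is open dense in `P ×_{E0} P`. -/
def OpenDense2 (P : Set Tr) (D : Set (Tr × Tr)) : Prop :=
  D ⊆ {p | CondPair P p} ∧
  (∀ p : Tr × Tr, CondPair P p → ∃ q ∈ D, pleq q p) ∧
  (∀ p : Tr × Tr, CondPair P p → ∀ q ∈ D, pleq p q → p ∈ D)

/-- A `P ×_{E0} P`-real name `c = ⟨C_n^i⟩`. -/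
def IsRealName (P : Set Tr) (c : ℕ → Bool → Set (Tr × Tr)) : Prop :=
  (∀ n : ℕ, ∀ i : Bool, c n i ⊆ {p | CondPair P p}) ∧
  (∀ n : ℕ, PreDense2 P (c n false ∪ c n true)) ∧
  (∀ n : ℕ, ∀ p ∈ c n false, ∀ q ∈ c n true, ¬ Compat P p q)

/-- `p` directly forces `c(n) = i`. -/
def DFVal (c : ℕ → Bool → Set (Tr × Tr)) (p : Tr × Tr) (n : ℕ) (i : Bool) : Prop :=
  ∃ q ∈ c n i, pleq p q

/-- `p` directly forces `s ⊂ c`. -/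
def DFPrefix (c : ℕ → Bool → Set (Tr × Tr)) (p : Tr × Tr) (s : Str) : Prop :=
  ∀ n < s.length, DFVal c p n (s.getD n false)

/-- `p` directly forces `c ∉ [U]`. -/
def DFAvoid (c : ℕ → Bool → Set (Tr × Tr)) (p : Tr × Tr) (U : Tr) : Prop :=
  ∃ s : Str, s ∉ U ∧ DFPrefix c p s

/-- `p` directly forces `c ≠ d`: there are incomparable strings `s, t` such that
`p` directly forces `s ⊂ c` and `t ⊂ d`. -/
def DFNe (c d : ℕ → Bool → Set (Tr × Tr)) (p : Tr × Tr) : Prop :=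
  ∃ s t : Str, ¬ s <+: t ∧ ¬ t <+: s ∧ DFPrefix c p s ∧ DFPrefix d p t

/-- The action `σ·c` of a string on a real name. -/
def actName (σ : Str) (c : ℕ → Bool → Set (Tr × Tr)) : ℕ → Bool → Set (Tr × Tr) :=
  fun n i => if σ.getD n false = true then c n (!i) else c n i

/-- The name `π_left` of the left generic real. -/
def piLeft : ℕ → Bool → Set (Tr × Tr) := fun n i =>
  {p | ∃ s t : Str, s.length = n+1 ∧ t.length = n+1 ∧ s.getD n false = i ∧ p = (Tbr s, Tbr t)}

/-- The name `π_right` of the right generic real. -/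
def piRight : ℕ → Bool → Set (Tr × Tr) := fun n i =>
  {p | ∃ s t : Str, s.length = n+1 ∧ t.length = n+1 ∧ t.getD n false = i ∧ p = (Tbr s, Tbr t)}


lemma length_act (s t : Str) : (act s t).length = t.length := by simp [act]

lemma getElem_act (s t : Str) (n : ℕ) (h : n < (act s t).length) :
    (act s t)[n] = Bool.xor (s.getD n false) (t[n]'(by simpa [length_act] using h)) := by
  simp [act]

lemma act_act (s t : Str) : act s (act s t) = t := by
  apply List.ext_getElem (by simp [length_act])
  intro i h1 h2
  rw [getElem_act, getElem_act]
  simp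

lemma mem_actT {σ : Str} {T : Tr} {u : Str} : u ∈ actT σ T ↔ act σ u ∈ T := by
  constructor
  · rintro ⟨v, hv, rfl⟩; rwa [act_act]
  · intro h; exact ⟨act σ u, h, act_act σ u⟩

lemma key_comparable (s t : Str) (R : Tr) (hs : s ∈ R)
    (hpref : ∀ n < t.length, ∃ s' : Str, s'.length = n+1 ∧
        s'.getD n false = t.getD n false ∧ R ⊆ Tbr s') :
    s <+: t ∨ t <+: s := by
  have hpt : ∀ n (hns : n < s.length) (hnt : n < t.length),
      s[n]'hns = t[n]'hnt := by
    intro n hns hnt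
    obtain ⟨s', hl, hget, hsub⟩ := hpref n hnt
    have hmem : s ∈ Tbr s' := hsub hs
    rcases hmem with h | ⟨h, hne⟩
    · have h1 : s[n]'(hns) = s'[n]'(by omega) := by
        rcases h with ⟨r, rfl⟩
        simp [List.getElem_append, hl]
      have h2 : s'.getD n false = s'[n]'(by omega) := List.getD_eq_getElem _ _ (by omega)
      have h3 : t.getD n false = t[n]'(hnt) := List.getD_eq_getElem _ _ hnt
      rw [h1, ← h2, hget, h3]
    · exfalso
      have hle : s.length ≤ s'.length := h.length_le
      rcases lt_or_eq_of_le hle with hlt | heq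
      · omega
      · exact hne (h.eq_of_length heq)
  rcases le_or_gt s.length t.length with hle | hlt
  · left
    have : s = t.take s.length := by
      apply List.ext_getElem (by simp; omega)
      intro i h1 h2
      rw [List.getElem_take]
      exact hpt i h1 (by omega)
    rw [this]; exact List.take_prefix _ _
  · right
    have : t = s.take t.length := by
      apply List.ext_getElem (by simp; omega)
      intro i h1 h2
      rw [List.getElem_take]
      exact (hpt i (by omega) h1).symm
    rw [this]; exact List.take_prefix _ _

lemma dfprefix_act {c : ℕ → Bool → Set (Tr × Tr)} {p : Tr × Tr} {σ s : Str}
    (h : DFPrefix (actName σ c) p s) : DFPrefix c p (act σ s) := by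
  intro n hn
  rw [length_act] at hn
  obtain ⟨q, hq, hpq⟩ := h n hn
  refine ⟨q, ?_, hpq⟩
  have hlt : n < (act σ s).length := by rwa [length_act]
  rw [List.getD_eq_getElem _ _ hlt, getElem_act]
  rw [List.getD_eq_getElem _ _ hn] at hq
  simp only [actName] at hq
  cases h' : σ.getD n false <;> rw [h'] at hq <;> simpa using hq

/-- Lemma `K2`: let `P` be a large-tree forcing notion with `2^{<ω} ∈ P`,
`c` a `P ×_{E0} P`-real name, `σ ∈ 2^{<ω}`, and suppose `⟨R,R'⟩ ∈ P ×_{E0} P` directly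
forces `σ·c ≠ π_left` (resp. `σ·c ≠ π_right`). Then some stronger
`⟨T,T'⟩ ∈ P ×_{E0} P`, `⟨T,T'⟩ ≤ ⟨R,R'⟩`, directly forces `c ∉ [σ·T]`
(resp. `c ∉ [σ·T']`). -/
theorem stmt19 (P : Set Tr) (hP : IsLTF P) (hfull : (Set.univ : Tr) ∈ P)
    (c : ℕ → Bool → Set (Tr × Tr)) (hc : IsRealName P c)
    (σ : Str) (R R' : Tr) (hRR' : CondPair P (R, R')) :
    (DFNe (actName σ c) piLeft (R, R') →
      ∃ T T' : Tr, CondPair P (T, T') ∧ pleq (T, T') (R, R') ∧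
        DFAvoid c (T, T') (actT σ T)) ∧
    (DFNe (actName σ c) piRight (R, R') →
      ∃ T T' : Tr, CondPair P (T, T') ∧ pleq (T, T') (R, R') ∧
        DFAvoid c (T, T') (actT σ T')) := by
  obtain ⟨s0, hs0⟩ := hRR'.2.2
  constructor
  · rintro ⟨s, t, hst, hts, hcs, hpt⟩
    refine ⟨R, R', hRR', ⟨subset_rfl, subset_rfl⟩, act σ s, ?_, dfprefix_act hcs⟩
    rw [mem_actT, act_act]
    intro hsR
    have hcomp := key_comparable s t R hsR (fun n hn => by
      obtain ⟨q, hq, hpq⟩ := hpt n hn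
      obtain ⟨s', t', hl1, hl2, hget, rfl⟩ := hq
      exact ⟨s', hl1, hget, hpq.1⟩)
    tauto
  · rintro ⟨s, t, hst, hts, hcs, hpt⟩
    refine ⟨R, R', hRR', ⟨subset_rfl, subset_rfl⟩, act σ s, ?_, dfprefix_act hcs⟩
    rw [mem_actT, act_act]
    intro hsR
    have hcomp := key_comparable s t R' hsR (fun n hn => by
      obtain ⟨q, hq, hpq⟩ := hpt n hn
      obtain ⟨s', t', hl1, hl2, hget, rfl⟩ := hq
      exact ⟨t', hl2, hget, hpq.2⟩)
    tauto


end E0L
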